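/- arXiv:2602.19787 — 2 statements merged into one kernel-verified Lean document; each statement's English description precedes it below -/
import Mathlib

section
/- Let ρ : Y → X be a local homeomorphism between locally compact Hausdorff spaces and let f : Y → ℂ be a continuous function with compact support. Then the function ρ_* f : X → ℂ defined by (ρ_* f)(x) = Σ_{y ∈ ρ⁻¹(x)} f(y) is well defined (each sum is finite) and continuous, and has compact support contained in ρ(supp f). -/
/-- If `ρ : Y → X` is a local homeomorphism between locally compact Hausdorff spaces and
`f : Y → ℂ` is continuous with compact support, then the fiberwise sum
`ρ_* f : x ↦ ∑_{y ∈ ρ⁻¹(x)} f y` is well defined (each sum has finitely many nonzero terms),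
continuous, and has compact support contained in `ρ (supp f)`. -/
theorem stmt_2 {X Y : Type*} [TopologicalSpace X] [TopologicalSpace Y]
    [LocallyCompactSpace X] [T2Space X] [LocallyCompactSpace Y] [T2Space Y]
    (ρ : Y → X) (hρ : IsLocalHomeomorph ρ)
    (f : Y → ℂ) (hf : Continuous f) (hsupp : HasCompactSupport f) :
    (∀ x : X, {y : Y | ρ y = x ∧ f y ≠ 0}.Finite) ∧
      Continuous (fun x : X => ∑' y : ρ ⁻¹' {x}, f y) ∧
      HasCompactSupport (fun x : X => ∑' y : ρ ⁻¹' {x}, f y) ∧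
      Function.support (fun x : X => ∑' y : ρ ⁻¹' {x}, f y) ⊆ ρ '' tsupport f := by
  classical
  have hρc : Continuous ρ := hρ.continuous
  choose E hEmem hEeq using hρ
  -- the compact part of each fiber is finite
  have hFib : ∀ x : X, (tsupport f ∩ ρ ⁻¹' {x}).Finite := by
    intro x
    set C : Set Y := tsupport f ∩ ρ ⁻¹' {x} with hC
    have hCc : IsCompact C :=
      hsupp.of_isClosed_subset (isClosed_tsupport f |>.inter
        (isClosed_singleton.preimage hρc)) Set.inter_subset_left
    obtain ⟨t, htC, hcov⟩ := hCc.elim_nhds_subcover (fun y => (E y).source)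
      (fun y _ => (E y).open_source.mem_nhds (hEmem y))
    refine Set.Finite.subset t.finite_toSet (fun z hz => ?_)
    obtain ⟨y, hyt, hzy⟩ := Set.mem_iUnion₂.mp (hcov hz)
    have hyC : y ∈ C := htC y hyt
    have h1 : ρ z = ρ y := by rw [hz.2, hyC.2]
    have : z = y := (E y).injOn hzy (hEmem y) (by rw [← hEeq y]; exact h1)
    rwa [this]
  have part1 : ∀ x : X, {y : Y | ρ y = x ∧ f y ≠ 0}.Finite := fun x =>
    (hFib x).subset (fun y hy => ⟨subset_tsupport f hy.2, hy.1⟩)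
  -- the fiberwise sum as restricted to a subtype has finite support
  have hTfin : ∀ x : X, (Function.support fun z : ρ ⁻¹' {x} => f z).Finite := by
    intro x
    have hs : (Function.support fun z : ρ ⁻¹' {x} => f z) ⊆
        Subtype.val ⁻¹' {y : Y | ρ y = x ∧ f y ≠ 0} := fun z hz => ⟨z.2, hz⟩
    exact ((part1 x).preimage (Subtype.val_injective.injOn)).subset hs
  -- the support statement
  have hsuppSub : Function.support (fun x : X => ∑' y : ρ ⁻¹' {x}, f y) ⊆ ρ '' tsupport f := by
    intro x hx
    by_contra hxn
    have hz : ∀ z : ρ ⁻¹' {x}, f z = 0 := by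
      intro z
      by_contra hfz
      exact hxn ⟨z, subset_tsupport f hfz, z.2⟩
    have h0 : (∑' y : ρ ⁻¹' {x}, f y) = 0 := by
      rw [tsum_eq_sum (s := (∅ : Finset (ρ ⁻¹' {x}))) (fun b _ => hz b)]
      simp
    exact hx h0
  -- continuity
  have hcont : Continuous (fun x : X => ∑' y : ρ ⁻¹' {x}, f y) := by
    rw [continuous_iff_continuousAt]
    intro x
    obtain ⟨U, hU, hUdisj⟩ := (hFib x).t2_separation
    set V : Y → Set Y := fun y => U y ∩ (E y).source with hV
    have hVopen : ∀ y, IsOpen (V y) := fun y => (hU y).2.inter (E y).open_source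
    have hVmem : ∀ y, y ∈ V y := fun y => ⟨(hU y).1, hEmem y⟩
    have hVsrc : ∀ y, V y ⊆ (E y).source := fun y => Set.inter_subset_right
    set F : Finset Y := (hFib x).toFinset with hFdef
    have hFmem : ∀ y, y ∈ F ↔ y ∈ tsupport f ∩ ρ ⁻¹' {x} := fun y => (hFib x).mem_toFinset
    set K : Set Y := tsupport f \ ⋃ y ∈ F, V y with hK
    have hKc : IsCompact K := hsupp.diff (isOpen_biUnion fun y _ => hVopen y)
    have hρK : IsClosed (ρ '' K) := (hKc.image hρc).isClosed
    set W : Set X := (⋂ y ∈ F, (E y) '' V y) \ ρ '' K with hW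
    have hWopen : IsOpen W :=
      IsOpen.sdiff (isOpen_biInter_finset fun y _ =>
        (E y).isOpen_image_of_subset_source (hVopen y) (hVsrc y)) hρK
    have hxW : x ∈ W := by
      constructor
      · refine Set.mem_iInter₂.mpr fun y hy => ?_
        have hyx : ρ y = x := ((hFmem y).mp hy).2
        exact ⟨y, hVmem y, by rw [← hEeq y]; exact hyx⟩
      · rintro ⟨z, hzK, hzx⟩
        have hzF : z ∈ F := (hFmem z).mpr ⟨hzK.1, hzx⟩
        exact hzK.2 (Set.mem_biUnion hzF (hVmem z))
    -- the local formula
    have key : ∀ x' ∈ W, (∑' y : ρ ⁻¹' {x'}, f y) = ∑ y ∈ F, f ((E y).symm x') := by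
      intro x' hx'
      have hx'mem : ∀ y ∈ F, x' ∈ (E y) '' V y := fun y hy =>
        Set.mem_iInter₂.mp hx'.1 y hy
      have hσ : ∀ y ∈ F, (E y).symm x' ∈ V y ∧ ρ ((E y).symm x') = x' := by
        intro y hy
        obtain ⟨v, hvV, hvx⟩ := hx'mem y hy
        have hvs : v ∈ (E y).source := hVsrc y hvV
        have hsv : (E y).symm x' = v := by rw [← hvx, (E y).left_inv hvs]
        refine ⟨hsv ▸ hvV, ?_⟩
        rw [hsv, hEeq y, hvx]
      rw [tsum_eq_sum (s := (hTfin x').toFinset)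
        (fun b hb => by
          by_contra h
          exact hb ((hTfin x').mem_toFinset.mpr h))]
      refine (Finset.sum_bij_ne_zero
        (i := fun y (h₁ : y ∈ F) (h₂ : f ((E y).symm x') ≠ 0) =>
          (⟨(E y).symm x', (hσ y h₁).2⟩ : ρ ⁻¹' {x'})) ?_ ?_ ?_ ?_).symm
      · intro y h₁ h₂
        exact (hTfin x').mem_toFinset.mpr h₂
      · intro y₁ h₁₁ h₁₂ y₂ h₂₁ h₂₂ heq
        by_contra hne
        have heq' : (E y₁).symm x' = (E y₂).symm x' := congrArg Subtype.val heq
        have h1 : (E y₁).symm x' ∈ U y₁ := ((hσ y₁ h₁₁).1).1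
        have h2 : (E y₁).symm x' ∈ U y₂ := heq' ▸ ((hσ y₂ h₂₁).1).1
        exact (hUdisj ((hFmem y₁).mp h₁₁) ((hFmem y₂).mp h₂₁) hne).le_bot ⟨h1, h2⟩
      · intro z hz hfz
        have hzsupp : (z : Y) ∈ tsupport f := subset_tsupport f hfz
        have hzK : (z : Y) ∉ K := fun hzK => hx'.2 ⟨z, hzK, z.2⟩
        have hzU : (z : Y) ∈ ⋃ y ∈ F, V y := by
          by_contra h
          exact hzK ⟨hzsupp, h⟩
        obtain ⟨y, hyF, hzy⟩ := Set.mem_iUnion₂.mp hzU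
        have hzs : (z : Y) ∈ (E y).source := hVsrc y hzy
        have hEz : (E y) (z : Y) = x' := by rw [← hEeq y]; exact z.2
        have hσz : (E y).symm x' = (z : Y) :=
          (congrArg (E y).symm hEz).symm.trans ((E y).left_inv hzs)
        refine ⟨y, hyF, by rw [hσz]; exact hfz, ?_⟩
        exact Subtype.ext hσz
      · intro y h₁ h₂
        rfl
    -- continuity of the local model
    have hgc : ContinuousAt (fun x' => ∑ y ∈ F, f ((E y).symm x')) x := by
      refine tendsto_finset_sum F fun y hy => ?_
      have hxt : x ∈ (E y).target := by
        obtain ⟨v, hvV, hvx⟩ := Set.mem_iInter₂.mp hxW.1 y hy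
        rw [← hvx]
        exact (E y).map_source (hVsrc y hvV)
      exact hf.continuousAt.comp ((E y).continuousAt_symm hxt)
    refine hgc.congr ?_
    exact Filter.eventuallyEq_of_mem (hWopen.mem_nhds hxW)
      (fun x' hx' => (key x' hx').symm)
  exact ⟨part1, hcont, HasCompactSupport.intro (hsupp.image hρc)
    (fun x hx => by
      by_contra h
      exact hx (hsuppSub h)), hsuppSub⟩
end

section
/- Let Y be a topological space and Δ a family of finite subsets of Y that is closed under limits of pairs, in the sense that if (y_λ) and (y'_λ) are nets converging to y and y' respectively with {y_λ, y'_λ} ∈ Δ for all λ, then {y, y'} ∈ Δ. Assume moreover that Δ is closed under limits of (m+1)-tuples for all m (hypothesis H₂). Then for every compact subset K ⊆ Y such that the set C_K = {y ∈ Y : ∃ y' ∈ K, {y, y'} ∈ Δ} is well defined, C_K is closed in Y. -/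
universe u

/-- Let `Δ` be a family of finite nonempty subsets of a topological space `Y`, closed under
nonempty subsets, which is closed under limits of pairs and, more generally, under limits of
`(m+1)`-tuples (hypothesis `(H₂)`), where convergence of nets is expressed via filters.
Then for every compact `K ⊆ Y`, the set `C_K = {y | ∃ y' ∈ K, {y, y'} ∈ Δ}` is closed. -/
theorem stmt_14 {Y : Type u} [TopologicalSpace Y]
    (Δ : Set (Set Y))
    (hfin : ∀ δ ∈ Δ, δ.Finite ∧ δ.Nonempty)
    (hsub : ∀ δ ∈ Δ, ∀ δ' : Set Y, δ' ⊆ δ → δ'.Nonempty → δ' ∈ Δ)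
    (hH2pair : ∀ (ι : Type u) (l : Filter ι), l.NeBot →
      ∀ (y y' : ι → Y) (a b : Y), Filter.Tendsto y l (nhds a) →
        Filter.Tendsto y' l (nhds b) →
        (∀ i, ({y i, y' i} : Set Y) ∈ Δ) → ({a, b} : Set Y) ∈ Δ)
    (hH2 : ∀ (m : ℕ) (ι : Type u) (l : Filter ι), l.NeBot →
      ∀ (y : Fin (m + 1) → ι → Y) (a : Fin (m + 1) → Y),
        (∀ k, Filter.Tendsto (y k) l (nhds (a k))) →
        (∀ i, Set.range (fun k => y k i) ∈ Δ) → Set.range a ∈ Δ)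
    (K : Set Y) (hK : IsCompact K) :
    IsClosed {y : Y | ∃ y' ∈ K, ({y, y'} : Set Y) ∈ Δ} := by
  apply isClosed_of_closure_subset
  intro y hy
  set S := {y : Y | ∃ y' ∈ K, ({y, y'} : Set Y) ∈ Δ} with hS
  have hne : (Filter.comap (Subtype.val : S → Y) (nhds y)).NeBot := by
    rw [Filter.comap_neBot_iff]
    intro t ht
    rcases mem_closure_iff_nhds.mp hy t ht with ⟨z, hzt, hzS⟩
    exact ⟨⟨z, hzS⟩, hzt⟩
  set l := Filter.comap (Subtype.val : S → Y) (nhds y) with hl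
  choose f hfK hfΔ using fun z : S => z.2
  have hmapne : (Filter.map f l).NeBot := Filter.map_neBot
  have hmap : Filter.map f l ≤ Filter.principal K := by
    rw [Filter.le_principal_iff]
    exact Filter.mem_map.mpr (Filter.univ_mem' fun z => hfK z)
  obtain ⟨b, hbK, hb⟩ := hK hmap
  have hl' : (l ⊓ Filter.comap f (nhds b)).NeBot := by
    have h1 : (Filter.map f (l ⊓ Filter.comap f (nhds b))).NeBot := by
      rw [Filter.push_pull]
      rw [inf_comm]
      exact hb.neBot
    exact h1.of_map
  have hΔ : ({y, b} : Set Y) ∈ Δ :=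
    hH2pair S (l ⊓ Filter.comap f (nhds b)) hl' Subtype.val f y b
      (Filter.tendsto_comap.mono_left inf_le_left)
      (Filter.tendsto_comap.mono_left inf_le_right)
      (fun z => hfΔ z)
  exact ⟨b, hbK, hΔ⟩
end
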